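/- The 3-dimensional space of 4×4 zero-column-sum matrices of the form with off-diagonal entries (1,2)=(2,1)=α+κ, (1,3)=(1,4)=(2,3)=(2,4)=α, (3,1)=(3,2)=(4,1)=(4,2)=β, (3,4)=(4,3)=β+κ (diagonals chosen for zero column sums), with α, β, κ ∈ ℝ, is closed under the commutator [A,B] = AB - BA. -/

import Mathlib

/-!
In the basis `A = M34 1 0 0`, `B = M34 0 1 0`, `K = M34 0 0 1` the matrix `K` is central and
`⁅A, B⁆ = 2 • (A - B)`. By bilinearity the bracket of two elements of the family is
`(α₁ β₂ - α₂ β₁) • ⁅A, B⁆ = M34 c (-c) 0` with `c = 2 (α₁ β₂ - α₂ β₁)`.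
-/

/-- A general element of Model 3.4 of the Lie-Markov hierarchy (the linear
version of HKY*): off-diagonal entries `(1,2)=(2,1)=α+κ`,
`(1,3)=(1,4)=(2,3)=(2,4)=α`, `(3,1)=(3,2)=(4,1)=(4,2)=β`, `(3,4)=(4,3)=β+κ`,
diagonals chosen so every column sums to zero. -/
def M34 (α β κ : ℝ) : Matrix (Fin 4) (Fin 4) ℝ :=
  !![-(α + κ + 2*β), α + κ, α, α;
     α + κ, -(α + κ + 2*β), α, α;
     β, β, -(2*α + β + κ), β + κ;
     β, β, β + κ, -(2*α + β + κ)]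

theorem lie_smul_add_smul_add_smul_of_lie_eq_zero {R L : Type*} [CommRing R] [LieRing L]
    [LieAlgebra R L] {A B K : L} (hAK : ⁅A, K⁆ = 0) (hBK : ⁅B, K⁆ = 0) (a₁ b₁ k₁ a₂ b₂ k₂ : R) :
    ⁅a₁ • A + b₁ • B + k₁ • K, a₂ • A + b₂ • B + k₂ • K⁆ = (a₁ * b₂ - a₂ * b₁) • ⁅A, B⁆ := by
  have hKA : ⁅K, A⁆ = 0 := by rw [← lie_skew, hAK, neg_zero]
  have hKB : ⁅K, B⁆ = 0 := by rw [← lie_skew, hBK, neg_zero]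
  simp only [add_lie, lie_add, smul_lie, lie_smul, lie_self, hAK, hBK, hKA, hKB,
    ← lie_skew B A]
  module

attribute [local instance] LieRing.ofAssociativeRing

theorem M34_eq_smul_add (α β κ : ℝ) :
    M34 α β κ = α • M34 1 0 0 + β • M34 0 1 0 + κ • M34 0 0 1 := by
  ext i j
  fin_cases i <;> fin_cases j <;> simp [M34] <;> ring

theorem lie_M34_alpha_beta :
    ⁅M34 1 0 0, M34 0 1 0⁆ = (2 : ℝ) • (M34 1 0 0 - M34 0 1 0) := by
  rw [Ring.lie_def]
  ext i j
  fin_cases i <;> fin_cases j <;> simp [M34] <;> norm_num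

theorem lie_M34_kappa (α β κ : ℝ) : ⁅M34 α β κ, M34 0 0 1⁆ = 0 := by
  rw [Ring.lie_def, sub_eq_zero]
  ext i j
  fin_cases i <;> fin_cases j <;> simp [M34] <;> ring

/-- Model 3.4 is closed under the commutator `[A,B] = A*B - B*A`. -/
theorem model34_closed_under_bracket (α₁ β₁ κ₁ α₂ β₂ κ₂ : ℝ) :
    ∃ α β κ : ℝ,
      M34 α₁ β₁ κ₁ * M34 α₂ β₂ κ₂ - M34 α₂ β₂ κ₂ * M34 α₁ β₁ κ₁ = M34 α β κ := by
  refine ⟨2 * (α₁ * β₂ - α₂ * β₁), -(2 * (α₁ * β₂ - α₂ * β₁)), 0, ?_⟩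
  rw [← Ring.lie_def, M34_eq_smul_add α₁, M34_eq_smul_add α₂,
    lie_smul_add_smul_add_smul_of_lie_eq_zero (lie_M34_kappa 1 0 0) (lie_M34_kappa 0 1 0),
    lie_M34_alpha_beta, M34_eq_smul_add (2 * _)]
  module
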